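/- Two pairs (c₁,d₁) and (c₂,d₂) in (ℤ/Nℤ)² with gcd(c₁,d₁,N)=1 and gcd(c₂,d₂,N)=1 represent the same element of P¹(ℤ/Nℤ) (i.e., there exists a unit λ ∈ (ℤ/Nℤ)* with (c₂,d₂)=(λc₁,λd₁)) if and only if c₁d₂ ≡ c₂d₁ (mod N). -/

import Mathlib

/-! If `a c₁ + b d₁ = 1`, the cross-multiplication identity makes `λ := a c₂ + b d₂` satisfy
`(c₂, d₂) = λ (c₁, d₁)`; since `λ` then divides both `c₂` and `d₂`, which generate the unit
ideal, `λ` is a unit. -/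

theorem IsCoprime.exists_mul_eq_of_mul_eq_mul {R : Type*} [CommRing R] {c₁ d₁ c₂ d₂ : R}
    (h₁ : IsCoprime c₁ d₁) (h : c₁ * d₂ = c₂ * d₁) :
    ∃ l : R, c₂ = l * c₁ ∧ d₂ = l * d₁ := by
  obtain ⟨a, b, hab⟩ := h₁
  exact ⟨a * c₂ + b * d₂, by linear_combination (-c₂) * hab - b * h,
    by linear_combination (-d₂) * hab + a * h⟩

theorem IsCoprime.exists_unit_mul_eq_iff {R : Type*} [CommRing R] {c₁ d₁ c₂ d₂ : R}
    (h₁ : IsCoprime c₁ d₁) (h₂ : IsCoprime c₂ d₂) :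
    (∃ l : Rˣ, c₂ = (l : R) * c₁ ∧ d₂ = (l : R) * d₁) ↔ c₁ * d₂ = c₂ * d₁ := by
  constructor
  · rintro ⟨l, rfl, rfl⟩
    ring
  · intro h
    obtain ⟨l, hc, hd⟩ := h₁.exists_mul_eq_of_mul_eq_mul h
    have hl : IsUnit l := h₂.isUnit_of_dvd' ⟨c₁, hc⟩ ⟨d₁, hd⟩
    exact ⟨hl.unit, hc, hd⟩

/-- Two pairs `(c₁,d₁)` and `(c₂,d₂)` in `(ℤ/Nℤ)²`, each with `gcd(cᵢ,dᵢ,N)=1`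
(equivalently, `cᵢ` and `dᵢ` generate the unit ideal of `ℤ/Nℤ`), represent the same
element of `P¹(ℤ/Nℤ)` (i.e. differ by a unit `λ ∈ (ℤ/Nℤ)ˣ`) if and only if
`c₁d₂ ≡ c₂d₁ (mod N)`. -/
theorem p1_eq_iff (N : ℕ) (c₁ d₁ c₂ d₂ : ZMod N)
    (h₁ : IsCoprime c₁ d₁) (h₂ : IsCoprime c₂ d₂) :
    (∃ l : (ZMod N)ˣ, c₂ = (l : ZMod N) * c₁ ∧ d₂ = (l : ZMod N) * d₁) ↔
      c₁ * d₂ = c₂ * d₁ :=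
  h₁.exists_unit_mul_eq_iff h₂
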